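/- arXiv:2208.01680 — 5 statements merged into one kernel-verified Lean document; each statement's English description precedes it below -/
import Mathlib

section
/- Three Gap Theorem: For any irrational α and N ∈ ℕ, if 0 = y_0 < y_1 < ... < y_{N-1} < 1 is the ordered list of fractional parts {mα} for 0 ≤ m < N, then the set of gaps {y_{j+1} - y_j : 0 ≤ j ≤ N-2} ∪ {1 - y_{N-1}} has cardinality at most 3. -/
/-!
Let `a` and `b` be the indices in `[1, N)` at which `{kα}` is smallest and largest, and put
`δ = {aα}`, `ε = {bα}`. The gap after `{mα}` is the least `{kα}` over the offsets `k ≠ 0` with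
`0 ≤ m + k < N`. It is `δ` when `m + a < N`, `1 - ε` when `b ≤ m`, and `δ + 1 - ε` otherwise,
witnessed by the offsets `a`, `-b` and `a - b`. In each case an offset `k` with a smaller
value would yield, after adding or subtracting `a` or `b`, an index in `[1, N)` beating the
extremality of `a` or `b`, because `{(j + k)α}` is `{jα} + {kα}` or `{jα} + {kα} - 1`.
-/

/-- The cyclic gap after the point `{m α}` among the points `{0α}, …, {(N-1)α}` on ℝ/ℤ:
the infimum of positive circular distances from `{m α}` to the other points. -/
noncomputable def gapAt (α : ℝ) (N : ℕ) (m : ℕ) : ℝ :=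
  sInf {d : ℝ | 0 < d ∧ ∃ m' : ℕ, m' < N ∧ Int.fract ((m' : ℝ) * α - (m : ℝ) * α) = d}

open Classical in
/-- The set of distinct cyclic gap lengths of the configuration `{0α}, …, {(N-1)α}`. -/
noncomputable def gapSet (α : ℝ) (N : ℕ) : Finset ℝ :=
  (Finset.range N).image (gapAt α N)

/-- The multiset of cyclic gaps of the configuration `{0α}, …, {(N-1)α}`. -/
noncomputable def gapMult (α : ℝ) (N : ℕ) : Multiset ℝ :=
  (Multiset.range N).map (gapAt α N)

/-- Cyclic extension of the ordering permutation `u` to integer indices, mod `N`. -/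
def uc (N : ℕ) (u : ℕ → ℕ) (j : ℤ) : ℕ := u ((j % (N : ℤ)).toNat)

theorem Int.fract_add_eq_or {R : Type*} [CommRing R] [LinearOrder R] [IsStrictOrderedRing R]
    [FloorRing R] (a b : R) :
    Int.fract (a + b) = Int.fract a + Int.fract b ∨
      Int.fract (a + b) = Int.fract a + Int.fract b - 1 := by
  obtain ⟨z, hz⟩ := Int.fract_add a b
  have hz0 : (z : R) ≤ 0 := by linarith [Int.fract_add_le a b]
  have hz1 : (-1 : R) ≤ z := by linarith [Int.fract_add_fract_le a b]
  have : z = 0 ∨ z = -1 := by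
    have : z ≤ 0 := by exact_mod_cast hz0
    have : -1 ≤ z := by exact_mod_cast hz1
    omega
  rcases this with rfl | rfl
  · left; push_cast at hz; linarith
  · right; push_cast at hz; linarith

theorem Int.fract_intCast_mul_eq_or_of_add_eq (α : ℝ) {i j k : ℤ} (h : j + k = i) :
    Int.fract (i * α) = Int.fract (j * α) + Int.fract (k * α) ∨
      Int.fract (i * α) = Int.fract (j * α) + Int.fract (k * α) - 1 := by
  subst h
  push_cast
  rw [add_mul]
  exact Int.fract_add_eq_or _ _

namespace Irrational

variable {α : ℝ}

theorem fract_intCast_mul_injective (hα : Irrational α) :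
    Function.Injective fun k : ℤ => Int.fract (k * α) := by
  intro j k h
  by_contra hne
  obtain ⟨z, hz⟩ := Int.fract_eq_fract.1 h
  refine (hα.intCast_mul (sub_ne_zero.2 hne)).ne_int z ?_
  push_cast
  linarith

theorem fract_intCast_mul_pos (hα : Irrational α) {k : ℤ} (hk : k ≠ 0) :
    0 < Int.fract (k * α) := by
  refine (Int.fract_nonneg _).lt_of_ne fun h => hk ?_
  exact hα.fract_intCast_mul_injective (by simpa using h.symm)

theorem fract_neg_intCast_mul (hα : Irrational α) {k : ℤ} (hk : k ≠ 0) :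
    Int.fract ((-k : ℤ) * α) = 1 - Int.fract (k * α) := by
  push_cast
  rw [neg_mul, Int.fract_neg (hα.fract_intCast_mul_pos hk).ne']

end Irrational

section Gaps

variable {α : ℝ} {N m : ℕ} {a b : ℤ}

theorem gapAt_eq_of_forall_le (hα : Irrational α) {k₀ : ℤ} (hk₀ : k₀ ≠ 0)
    (h0 : 0 ≤ m + k₀) (hN : m + k₀ < N)
    (hle : ∀ k : ℤ, k ≠ 0 → 0 ≤ m + k → m + k < N → Int.fract (k₀ * α) ≤ Int.fract (k * α)) :
    gapAt α N m = Int.fract (k₀ * α) := by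
  have hoffset (m' : ℕ) :
      Int.fract ((m' : ℝ) * α - m * α) = Int.fract (((m' - m : ℤ) : ℝ) * α) := by
    push_cast; ring_nf
  refine IsLeast.csInf_eq ⟨⟨hα.fract_intCast_mul_pos hk₀, (m + k₀).toNat, by omega, ?_⟩, ?_⟩
  · rw [hoffset, show ((m + k₀).toNat - m : ℤ) = k₀ by omega]
  · rintro d ⟨hd, m', hm', rfl⟩
    rw [hoffset] at hd ⊢
    refine hle _ (fun h => ?_) (by omega) (by omega)
    simp [h] at hd

theorem gapAt_eq_of_add_lt (hα : Irrational α) (ha : a ∈ Set.Ico 1 (N : ℤ))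
    (hmin : ∀ k ∈ Set.Ico 1 (N : ℤ), Int.fract (a * α) ≤ Int.fract (k * α)) (hm : m + a < N) :
    gapAt α N m = Int.fract (a * α) := by
  obtain ⟨ha1, haN⟩ := ha
  refine gapAt_eq_of_forall_le hα (by omega) (by omega) hm fun k hk0 hk hkN => ?_
  rcases hk0.lt_or_gt with hneg | hpos
  · have hfract := hα.fract_intCast_mul_pos hk0
    have hak := hmin (a - k) ⟨by omega, by omega⟩
    have := Int.fract_lt_one ((a - k : ℤ) * α)
    rcases Int.fract_intCast_mul_eq_or_of_add_eq α (sub_add_cancel a k) with h | h <;> linarith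
  · exact hmin k ⟨hpos, by omega⟩

theorem gapAt_eq_of_le (hα : Irrational α) (hm : m < N) (hb : b ∈ Set.Ico 1 (N : ℤ))
    (hmax : ∀ k ∈ Set.Ico 1 (N : ℤ), Int.fract (k * α) ≤ Int.fract (b * α)) (hbm : b ≤ m) :
    gapAt α N m = 1 - Int.fract (b * α) := by
  obtain ⟨hb1, hbN⟩ := hb
  rw [← hα.fract_neg_intCast_mul (by omega : b ≠ 0)]
  refine gapAt_eq_of_forall_le hα (by omega) (by omega) (by omega) fun k hk0 hk hkN => ?_
  rw [hα.fract_neg_intCast_mul (by omega : b ≠ 0)]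
  rcases hk0.lt_or_gt with hneg | hpos
  · have := hmax (-k) ⟨by omega, by omega⟩
    have := hα.fract_neg_intCast_mul (by omega : -k ≠ 0)
    rw [neg_neg] at this
    linarith
  · have hfract := hα.fract_intCast_mul_pos hk0
    have hkb := hmax (k + b) ⟨by omega, by omega⟩
    have := Int.fract_nonneg ((k + b : ℤ) * α)
    rcases Int.fract_intCast_mul_eq_or_of_add_eq α (rfl : k + b = k + b) with h | h <;> linarith

theorem gapAt_eq_of_lt_of_le (hα : Irrational α) (ha : a ∈ Set.Ico 1 (N : ℤ))
    (hb : b ∈ Set.Ico 1 (N : ℤ))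
    (hmin : ∀ k ∈ Set.Ico 1 (N : ℤ), Int.fract (a * α) ≤ Int.fract (k * α))
    (hmax : ∀ k ∈ Set.Ico 1 (N : ℤ), Int.fract (k * α) ≤ Int.fract (b * α))
    (hm : N ≤ m + a) (hmb : m < b) :
    gapAt α N m = Int.fract (a * α) + 1 - Int.fract (b * α) := by
  obtain ⟨ha1, haN⟩ := ha
  obtain ⟨hb1, hbN⟩ := hb
  have hab : a - b ≠ 0 := by
    -- `a = b` would make `{mα}` both the least and the largest value, forcing `m = a < b`
    intro hab
    have hm1 : (m : ℤ) ∈ Set.Ico 1 (N : ℤ) := ⟨by omega, by omega⟩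
    have := hα.fract_intCast_mul_injective <|
      le_antisymm (hmin m hm1) ((hmax m hm1).trans_eq (by rw [show a = b by omega]))
    omega
  have hval : Int.fract ((a - b : ℤ) * α) = Int.fract (a * α) + 1 - Int.fract (b * α) := by
    have := hα.fract_intCast_mul_pos hab
    have := hmin b ⟨hb1, hbN⟩
    rcases Int.fract_intCast_mul_eq_or_of_add_eq α (sub_add_cancel a b) with h | h <;> linarith
  rw [← hval]
  refine gapAt_eq_of_forall_le hα hab (by omega) (by omega) fun k hk0 hk hkN => ?_
  rw [hval]
  rcases hk0.lt_or_gt with hneg | hpos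
  · have hbk := hmin (b + k) ⟨by omega, by omega⟩
    have := hmax (-k) ⟨by omega, by omega⟩
    have := Int.fract_lt_one ((b + k : ℤ) * α)
    have := hα.fract_neg_intCast_mul (by omega : -k ≠ 0)
    rw [neg_neg] at this
    rcases Int.fract_intCast_mul_eq_or_of_add_eq α (by ring : b + k + -k = b) with h | h <;>
      linarith
  · have hfract := hα.fract_intCast_mul_pos hk0
    have := hmin (a - k) ⟨by omega, by omega⟩
    have := hmax (a - k) ⟨by omega, by omega⟩
    rcases Int.fract_intCast_mul_eq_or_of_add_eq α (sub_add_cancel a k) with h | h <;> linarith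

theorem gapSet_subset (hα : Irrational α) (ha : a ∈ Set.Ico 1 (N : ℤ))
    (hb : b ∈ Set.Ico 1 (N : ℤ))
    (hmin : ∀ k ∈ Set.Ico 1 (N : ℤ), Int.fract (a * α) ≤ Int.fract (k * α))
    (hmax : ∀ k ∈ Set.Ico 1 (N : ℤ), Int.fract (k * α) ≤ Int.fract (b * α)) :
    gapSet α N ⊆ {Int.fract (a * α), 1 - Int.fract (b * α),
      Int.fract (a * α) + 1 - Int.fract (b * α)} := by
  intro x hx
  obtain ⟨m, hm, rfl⟩ := Finset.mem_image.1 hx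
  rcases lt_or_ge ((m : ℤ) + a) N with h₁ | h₁
  · simp [gapAt_eq_of_add_lt hα ha hmin h₁]
  rcases le_or_gt b m with h₂ | h₂
  · simp [gapAt_eq_of_le hα (Finset.mem_range.1 hm) hb hmax h₂]
  · simp [gapAt_eq_of_lt_of_le hα ha hb hmin hmax h₁ h₂]

end Gaps

theorem three_gap_theorem (α : ℝ) (hα : Irrational α) (N : ℕ) :
    (gapSet α N).card ≤ 3 := by
  rcases le_or_gt N 1 with hN | hN
  · exact Finset.card_image_le.trans ((Finset.card_range N).trans_le (by omega))
  have hne : (Set.Ico 1 (N : ℤ)).Nonempty := ⟨1, le_rfl, by omega⟩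
  obtain ⟨a, ha, hmin⟩ :=
    (Set.Ico 1 (N : ℤ)).exists_min_image (fun k : ℤ => Int.fract (k * α)) (Set.finite_Ico _ _) hne
  obtain ⟨b, hb, hmax⟩ :=
    (Set.Ico 1 (N : ℤ)).exists_max_image (fun k : ℤ => Int.fract (k * α)) (Set.finite_Ico _ _) hne
  exact (Finset.card_le_card (gapSet_subset hα ha hb hmin hmax)).trans Finset.card_le_three
end

section
/- If N is a relabeling time, then u_j ≡ j·u_1 (mod N) for all j = 0, 1, ..., N-1, where (u_j) is the permutation of {0,...,N-1} with {u_0 α} < {u_1 α} < ... < {u_{N-1} α}. -/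
/-!
Write `{u 0 α} < {u 1 α} < ⋯ < {u (N - 1) α}`; then `u 0 = 0`. The gap after `{u j α}` is
`{(u (j + 1) - u j) α}` (indices mod `N`), and as `α` is irrational a gap length determines the
integer `u (j + 1) - u j`. The gaps after `0` and after `{u (N - 1) α}` are `{u 1 α}` and
`{-u (N - 1) α}`, which differ, so with only two gap lengths every step is `+u 1` or `-u (N - 1)`.
Finally `u 1 + u (N - 1) = N`: the label `N - u 1` cannot step up by `u 1`, and if
`u 1 + u (N - 1) < N` the point `{(u 1 + u (N - 1)) α} = {u 1 α} + {u (N - 1) α}` would lie beyond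
the largest one. Hence every step is `+u 1` mod `N`.
-/

open Set Function Int

section FractSub

variable {R : Type*} [CommRing R] [LinearOrder R] [IsStrictOrderedRing R] [FloorRing R] {x y : R}

theorem Int.fract_sub_of_fract_le (h : fract y ≤ fract x) : fract (x - y) = fract x - fract y :=
  fract_eq_iff.2 ⟨sub_nonneg.2 h, by linarith [fract_lt_one x, fract_nonneg y],
    ⌊x⌋ - ⌊y⌋, by push_cast; linarith [floor_add_fract x, floor_add_fract y]⟩

theorem Int.fract_sub_of_fract_lt (h : fract x < fract y) :
    fract (x - y) = fract x - fract y + 1 :=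
  fract_eq_iff.2 ⟨by linarith [fract_nonneg x, fract_lt_one y], by linarith,
    ⌊x⌋ - ⌊y⌋ - 1, by push_cast; linarith [floor_add_fract x, floor_add_fract y]⟩

theorem Int.fract_sub_pos (h : fract x ≠ fract y) : 0 < fract (x - y) :=
  (fract_nonneg _).lt_of_ne' fun h0 => h <|
    let ⟨z, hz⟩ := fract_eq_zero_iff.1 h0
    fract_eq_fract.2 ⟨z, hz.symm⟩

end FractSub

theorem Irrational.injective_fract_intCast_mul {α : ℝ} (hα : Irrational α) :
    Injective fun k : ℤ => fract (k * α) := by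
  intro k l h
  obtain ⟨z, hz⟩ := fract_eq_fract.1 h
  by_contra hne
  refine (hα.intCast_mul (sub_ne_zero.2 hne)).ne_int z ?_
  push_cast
  linarith

section SortedOnCircle

variable {R : Type*} [CommRing R] [LinearOrder R] [IsStrictOrderedRing R] [FloorRing R]
  {N : ℕ} {y : ℕ → R}

/-- `fract (y k - y j)` is the counterclockwise distance from `y j` to `y k` on `ℝ / ℤ`. -/
theorem fract_sub_succ_le (hy : StrictMonoOn (fun k => fract (y k)) (Iio N)) {j k : ℕ}
    (hj : j < N) (hk : k < N) (hkj : k ≠ j) :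
    fract (y ((j + 1) % N) - y j) ≤ fract (y k - y j) := by
  rcases hkj.lt_or_gt with hlt | hgt
  · rw [fract_sub_of_fract_lt ((hy.lt_iff_lt hk hj).2 hlt)]
    by_cases h : j + 1 < N
    · rw [Nat.mod_eq_of_lt h, fract_sub_of_fract_le ((hy.le_iff_le hj h).2 j.le_succ)]
      linarith [fract_lt_one (y (j + 1)), fract_nonneg (y k)]
    · have hwrap : (j + 1) % N = 0 := by rw [show j + 1 = N by omega, Nat.mod_self]
      rw [hwrap, fract_sub_of_fract_lt ((hy.lt_iff_lt (by omega : 0 < N) hj).2 (by omega : 0 < j))]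
      linarith [(hy.le_iff_le (by omega : 0 < N) hk).2 k.zero_le]
  · have h : j + 1 < N := by omega
    rw [Nat.mod_eq_of_lt h, fract_sub_of_fract_le ((hy.le_iff_le hj h).2 j.le_succ),
      fract_sub_of_fract_le ((hy.le_iff_le hj hk).2 hgt.le)]
    linarith [(hy.le_iff_le h hk).2 hgt]

theorem isLeast_fract_sub_succ (hN : 2 ≤ N) (hy : StrictMonoOn (fun k => fract (y k)) (Iio N))
    {j : ℕ} (hj : j < N) :
    IsLeast {d | 0 < d ∧ ∃ k < N, fract (y k - y j) = d} (fract (y ((j + 1) % N) - y j)) := by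
  have hsucc : (j + 1) % N < N := Nat.mod_lt _ (by omega)
  have hsucc_ne : (j + 1) % N ≠ j := by
    by_cases h : j + 1 < N
    · simp [Nat.mod_eq_of_lt h]
    · rw [show j + 1 = N by omega, Nat.mod_self]; omega
  refine ⟨⟨fract_sub_pos fun h => hsucc_ne (hy.injOn hsucc hj h), _, hsucc, rfl⟩, ?_⟩
  rintro _ ⟨hd, k, hk, rfl⟩
  exact fract_sub_succ_le hy hj hk fun hkj => by simp [hkj] at hd

end SortedOnCircle

theorem Finset.eq_pair_of_card_eq_two {β : Type*} [DecidableEq β] {s : Finset β} {x y : β}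
    (hs : s.card = 2) (hx : x ∈ s) (hy : y ∈ s) (hxy : x ≠ y) : s = {x, y} :=
  (eq_of_subset_of_card_le (insert_subset hx (singleton_subset_iff.2 hy))
    (by rw [hs, card_pair hxy])).symm

namespace RelabelingTime

structure IsOrdering (α : ℝ) (N : ℕ) (u : ℕ → ℕ) : Prop where
  bijOn : BijOn u (Iio N) (Iio N)
  strictMonoOn : StrictMonoOn (fun j => fract ((u j : ℝ) * α)) (Iio N)

variable {α : ℝ} {N : ℕ} {u : ℕ → ℕ}

theorem gapAt_apply_eq (hN : 2 ≤ N) (hu : IsOrdering α N u) {j : ℕ} (hj : j < N) :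
    gapAt α N (u j) = fract ((u ((j + 1) % N) : ℝ) * α - u j * α) := by
  have hset : {d : ℝ | 0 < d ∧ ∃ m : ℕ, m < N ∧ fract ((m : ℝ) * α - u j * α) = d} =
      {d | 0 < d ∧ ∃ k < N, fract ((u k : ℝ) * α - u j * α) = d} := by
    ext d
    refine and_congr_right fun _ => ⟨?_, ?_⟩
    · rintro ⟨m, hm, rfl⟩
      obtain ⟨k, hk, rfl⟩ := hu.bijOn.surjOn hm
      exact ⟨k, hk, rfl⟩
    · rintro ⟨k, hk, rfl⟩
      exact ⟨u k, hu.bijOn.mapsTo hk, rfl⟩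
  rw [gapAt, hset]
  exact (isLeast_fract_sub_succ (y := fun k => (u k : ℝ) * α) hN hu.strictMonoOn hj).csInf_eq

theorem apply_zero (hα : Irrational α) (hN : 2 ≤ N) (hu : IsOrdering α N u) : u 0 = 0 := by
  obtain ⟨k, hk, hk0⟩ := hu.bijOn.surjOn (show 0 < N by omega)
  have hle : fract ((u 0 : ℝ) * α) ≤ fract ((u k : ℝ) * α) :=
    (hu.strictMonoOn.le_iff_le (show 0 < N by omega) hk).2 k.zero_le
  rw [hk0, Nat.cast_zero, zero_mul, fract_zero] at hle
  have h0 : fract (((u 0 : ℤ) : ℝ) * α) = fract (((0 : ℤ) : ℝ) * α) := by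
    simpa using le_antisymm hle (fract_nonneg _)
  exact_mod_cast hα.injective_fract_intCast_mul h0

theorem apply_one_pos (hα : Irrational α) (hN : 2 ≤ N) (hu : IsOrdering α N u) : 0 < u 1 := by
  refine Nat.pos_of_ne_zero fun h1 => one_ne_zero <|
    hu.bijOn.injOn (show 1 < N by omega) (show 0 < N by omega) ?_
  rw [h1, apply_zero hα hN hu]

theorem fract_apply_one_le (hα : Irrational α) (hN : 2 ≤ N) (hu : IsOrdering α N u) {m : ℕ}
    (hm0 : 0 < m) (hm : m < N) : fract ((u 1 : ℝ) * α) ≤ fract ((m : ℝ) * α) := by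
  obtain ⟨k, hk, rfl⟩ := hu.bijOn.surjOn hm
  have hk0 : k ≠ 0 := by rintro rfl; rw [apply_zero hα hN hu] at hm0; omega
  exact (hu.strictMonoOn.le_iff_le (show 1 < N by omega) hk).2 (by omega)

theorem fract_le_apply_last (hu : IsOrdering α N u) {m : ℕ} (hm : m < N) :
    fract ((m : ℝ) * α) ≤ fract ((u (N - 1) : ℝ) * α) := by
  obtain ⟨k, hk, rfl⟩ := hu.bijOn.surjOn hm
  exact (hu.strictMonoOn.le_iff_le hk (show N - 1 < N by omega)).2 (Nat.le_sub_one_of_lt hk)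

theorem le_apply_one_add_apply_last (hα : Irrational α) (hN : 2 ≤ N) (hu : IsOrdering α N u) :
    N ≤ u 1 + u (N - 1) := by
  by_contra! hlt
  have hmin := fract_apply_one_le hα hN hu (add_pos_of_pos_of_nonneg (apply_one_pos hα hN hu)
    (Nat.zero_le _)) hlt
  have hsub : fract (((u 1 + u (N - 1) : ℕ) : ℝ) * α - u 1 * α) = fract ((u (N - 1) : ℝ) * α) := by
    push_cast; ring_nf
  rw [fract_sub_of_fract_le hmin] at hsub
  have hpos : 0 < fract ((u 1 : ℝ) * α) :=
    (fract_nonneg _).trans_lt ((hu.strictMonoOn.lt_iff_lt (show 0 < N by omega)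
      (show 1 < N by omega)).2 zero_lt_one)
  linarith [fract_le_apply_last hu hlt]

theorem succ_sub_eq_of_gapAt_eq (hα : Irrational α) (hN : 2 ≤ N) (hu : IsOrdering α N u)
    {j k : ℕ} (hj : j < N) (hk : k < N) (h : gapAt α N (u j) = gapAt α N (u k)) :
    (u ((j + 1) % N) : ℤ) - u j = u ((k + 1) % N) - u k := by
  rw [gapAt_apply_eq hN hu hj, gapAt_apply_eq hN hu hk] at h
  exact hα.injective_fract_intCast_mul (by push_cast; rwa [sub_mul, sub_mul])

theorem apply_succ_sub_eq_or (hα : Irrational α) (hN : 2 ≤ N) (hu : IsOrdering α N u)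
    (hrel : (gapSet α N).card = 2) {j : ℕ} (hj : j < N) :
    (u ((j + 1) % N) : ℤ) - u j = u 1 ∨ (u ((j + 1) % N) : ℤ) - u j = -u (N - 1) := by
  classical
  have h0 := apply_zero hα hN hu
  have hsucc_zero : (0 + 1) % N = 1 := Nat.mod_eq_of_lt (by omega)
  have hsucc_last : (N - 1 + 1) % N = 0 := by rw [Nat.sub_add_cancel (by omega), Nat.mod_self]
  have hmem : ∀ k < N, gapAt α N (u k) ∈ gapSet α N := fun k hk =>
    Finset.mem_image_of_mem _ (Finset.mem_range.2 (hu.bijOn.mapsTo hk))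
  have hne : gapAt α N (u 0) ≠ gapAt α N (u (N - 1)) := fun h => by
    have := succ_sub_eq_of_gapAt_eq hα hN hu (by omega) (by omega) h
    rw [hsucc_zero, hsucc_last, h0] at this
    have := apply_one_pos hα hN hu
    omega
  have hgaps := Finset.eq_pair_of_card_eq_two hrel (hmem 0 (by omega)) (hmem (N - 1) (by omega)) hne
  have hj_mem := hmem j hj
  rw [hgaps, Finset.mem_insert, Finset.mem_singleton] at hj_mem
  rcases hj_mem with h | h
  · left
    have := succ_sub_eq_of_gapAt_eq hα hN hu hj (by omega) h
    rwa [hsucc_zero, h0, Nat.cast_zero, sub_zero] at this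
  · right
    have := succ_sub_eq_of_gapAt_eq hα hN hu hj (by omega) h
    rwa [hsucc_last, h0, Nat.cast_zero, zero_sub] at this

theorem apply_one_add_apply_last_le (hα : Irrational α) (hN : 2 ≤ N) (hu : IsOrdering α N u)
    (hrel : (gapSet α N).card = 2) : u 1 + u (N - 1) ≤ N := by
  have ha := apply_one_pos hα hN hu
  obtain ⟨j, hj, hj_eq⟩ := hu.bijOn.surjOn (show N - u 1 < N by omega)
  have hsucc_lt : u ((j + 1) % N) < N := hu.bijOn.mapsTo (Nat.mod_lt _ (by omega))
  have h1 : u 1 < N := hu.bijOn.mapsTo (show 1 < N by omega)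
  rcases apply_succ_sub_eq_or hα hN hu hrel hj with h | h <;> omega

theorem apply_succ_modEq (hα : Irrational α) (hN : 2 ≤ N) (hu : IsOrdering α N u)
    (hrel : (gapSet α N).card = 2) {j : ℕ} (hj : j + 1 < N) :
    u (j + 1) ≡ u j + u 1 [MOD N] := by
  have hab := le_antisymm (apply_one_add_apply_last_le hα hN hu hrel)
    (le_apply_one_add_apply_last hα hN hu)
  have h := apply_succ_sub_eq_or hα hN hu hrel (j := j) (by omega)
  rw [Nat.mod_eq_of_lt hj] at h
  rcases h with h | h
  · rw [show u (j + 1) = u j + u 1 by omega]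
  · rw [Nat.ModEq, show u j + u 1 = u (j + 1) + N by omega, Nat.add_mod_right]

end RelabelingTime

open RelabelingTime in
theorem relabeling_mod_formula (α : ℝ) (hα : Irrational α) (N : ℕ) (hN : 2 ≤ N)
    (u : ℕ → ℕ) (hbij : Set.BijOn u (Set.Iio N) (Set.Iio N))
    (hmono : StrictMonoOn (fun j => Int.fract ((u j : ℝ) * α)) (Set.Iio N))
    (hrel : (gapSet α N).card = 2) :
    ∀ j < N, u j ≡ j * u 1 [MOD N] := by
  have hu : IsOrdering α N u := ⟨hbij, hmono⟩
  intro j hj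
  induction j with
  | zero => rw [apply_zero hα hN hu, zero_mul]
  | succ j ih =>
    calc u (j + 1) ≡ u j + u 1 [MOD N] := apply_succ_modEq hα hN hu hrel hj
      _ ≡ j * u 1 + u 1 [MOD N] := (ih (by omega)).add_right _
      _ = (j + 1) * u 1 := by ring
end

section
/- If N is a relabeling time, then gcd(u_1, N) = 1, where u_1 is the index with {u_1 α} minimal positive among {mα}, 0 ≤ m < N. -/
/-! Sort the points as `{u 0 α} < ⋯ < {u (N-1) α}`. Then `u 0 = 0`, and the gap after the
`j`-th point is `{k α}` for the step `k = u (j+1) - u j` (indices read cyclically). The gaps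
after `u 0` and `u (N-1)` are `{P α}` and `{-Q α}` with `P = u 1`, `Q = u (N-1)`; they differ,
so when there are only two gap lengths, irrationality forces every step to be `P` or `-Q`.
A gap is the distance to the nearest point ahead, so the step of shorter length is taken
whenever it stays inside `[0, N)`, and looking at the points near the ends of `[0, N)` gives
`P + Q = N`. Hence every step is `≡ P` mod `N`, so `u j ≡ j P`, and since `1` is some `u j`,
`P` is a unit mod `N`. -/

theorem Irrational.fract_intCast_mul_injective_s5 {α : ℝ} (hα : Irrational α) :
    Function.Injective fun k : ℤ => Int.fract (k * α) := by
  intro k k' h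
  by_contra hne
  obtain ⟨z, hz⟩ := Int.fract_eq_fract.1 h
  exact (hα.intCast_mul (sub_ne_zero.2 hne)).ne_int z (by push_cast; linarith)

namespace Int

theorem fract_sub_of_fract_le_s5 {x y : ℝ} (h : fract y ≤ fract x) :
    fract (x - y) = fract x - fract y :=
  fract_eq_iff.2 ⟨by linarith, by linarith [fract_lt_one x, fract_nonneg y],
    ⌊x⌋ - ⌊y⌋, by rw [← self_sub_floor x, ← self_sub_floor y]; push_cast; ring⟩

theorem fract_sub_of_fract_lt_s5 {x y : ℝ} (h : fract x < fract y) :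
    fract (x - y) = fract x - fract y + 1 :=
  fract_eq_iff.2 ⟨by linarith [fract_nonneg x, fract_lt_one y], by linarith,
    ⌊x⌋ - ⌊y⌋ - 1, by rw [← self_sub_floor x, ← self_sub_floor y]; push_cast; ring⟩

theorem fract_sub_pos_s5 {x y : ℝ} (h : fract x ≠ fract y) : 0 < fract (x - y) := by
  rcases h.lt_or_gt with h | h
  · rw [fract_sub_of_fract_lt_s5 h]; linarith [fract_nonneg x, fract_lt_one y]
  · rw [fract_sub_of_fract_le_s5 h.le]; linarith

end Int

theorem Nat.add_one_mod_ne_self {N j : ℕ} (hN : 2 ≤ N) (hj : j < N) : (j + 1) % N ≠ j := by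
  rcases (Nat.succ_le_of_lt hj).lt_or_eq with h | h
  · rw [Nat.mod_eq_of_lt h]; omega
  · rw [show j + 1 = N from h, Nat.mod_self]; omega

theorem fract_sub_add_one_mod_le {N : ℕ} {y : ℕ → ℝ}
    (hy : StrictMonoOn (fun j => Int.fract (y j)) (Set.Iio N)) {i j : ℕ} (hi : i < N)
    (hj : j < N) (hij : i ≠ j) :
    Int.fract (y ((j + 1) % N) - y j) ≤ Int.fract (y i - y j) := by
  have lt {a b : ℕ} (ha : a < N) (hb : b < N) (hab : a < b) :
      Int.fract (y a) < Int.fract (y b) := hy ha hb hab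
  rcases (Nat.succ_le_of_lt hj).lt_or_eq with hsucc | hlast
  · rw [Nat.mod_eq_of_lt hsucc, Int.fract_sub_of_fract_le_s5 (lt hj hsucc j.lt_succ_self).le]
    rcases hij.lt_or_gt with hij | hij
    · rw [Int.fract_sub_of_fract_lt_s5 (lt hi hj hij)]
      linarith [Int.fract_lt_one (y (j + 1)), Int.fract_nonneg (y i)]
    · rw [Int.fract_sub_of_fract_le_s5 (lt hj hi hij).le]
      linarith [(hy.monotoneOn hsucc hi hij : Int.fract (y (j + 1)) ≤ Int.fract (y i))]
  · have hij : i < j := by omega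
    have hN : 0 < N := by omega
    rw [show j + 1 = N from hlast, Nat.mod_self, Int.fract_sub_of_fract_lt_s5 (lt hN hj (by omega)),
      Int.fract_sub_of_fract_lt_s5 (lt hi hj hij)]
    linarith [(hy.monotoneOn hN hi (Nat.zero_le i) : Int.fract (y 0) ≤ Int.fract (y i))]

namespace Relabeling

variable {α : ℝ} {N : ℕ} {u : ℕ → ℕ}

/-- When `u j` indexes the `j`-th point in increasing order, the index difference between
consecutive points around the circle. -/
def step (N : ℕ) (u : ℕ → ℕ) (j : ℕ) : ℤ := u ((j + 1) % N) - u j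

theorem step_zero (hN : 2 ≤ N) (hu0 : u 0 = 0) : step N u 0 = u 1 := by
  simp [step, Nat.mod_eq_of_lt (show 1 < N by omega), hu0]

theorem step_pred (hN : 0 < N) (hu0 : u 0 = 0) : step N u (N - 1) = -u (N - 1) := by
  simp [step, Nat.sub_add_cancel hN, hu0]

theorem apply_zero_eq_zero (hN : 0 < N) (hbij : Set.BijOn u (Set.Iio N) (Set.Iio N))
    (hmono : StrictMonoOn (fun j => Int.fract ((u j : ℝ) * α)) (Set.Iio N)) : u 0 = 0 := by
  obtain ⟨j, hj, hj0⟩ := hbij.surjOn (show 0 ∈ Set.Iio N from hN)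
  by_contra h
  have hlt := hmono (show 0 ∈ Set.Iio N from hN) hj
    (Nat.pos_of_ne_zero (by rintro rfl; exact h hj0))
  simp only [hj0, Nat.cast_zero, zero_mul, Int.fract_zero] at hlt
  exact hlt.not_ge (Int.fract_nonneg _)

theorem gapAt_le (hα : Irrational α) {m m' : ℕ} (hm' : m' < N) (hne : m' ≠ m) :
    gapAt α N m ≤ Int.fract (((m' : ℤ) - m : ℤ) * α) := by
  have hpos : 0 < Int.fract (((m' : ℤ) - m : ℤ) * α) := by
    refine (Int.fract_nonneg _).lt_of_ne' fun h => hne ?_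
    have := hα.fract_intCast_mul_injective_s5 (a₁ := (m' : ℤ) - m) (a₂ := 0) (by simpa using h)
    omega
  exact csInf_le ⟨0, fun _ hd => hd.1.le⟩ ⟨hpos, m', hm', by push_cast; ring_nf⟩

theorem gapAt_apply_eq_fract_step (hN : 2 ≤ N) (hbij : Set.BijOn u (Set.Iio N) (Set.Iio N))
    (hmono : StrictMonoOn (fun j => Int.fract ((u j : ℝ) * α)) (Set.Iio N)) {j : ℕ} (hj : j < N) :
    gapAt α N (u j) = Int.fract (step N u j * α) := by
  have hsucc : (j + 1) % N < N := Nat.mod_lt _ (by omega)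
  rw [show (step N u j : ℝ) * α = u ((j + 1) % N) * α - u j * α by simp [step]; ring]
  have hpos := Int.fract_sub_pos_s5 fun h => Nat.add_one_mod_ne_self hN hj (hmono.injOn hsucc hj h)
  refine IsLeast.csInf_eq ⟨⟨hpos, _, hbij.mapsTo hsucc, rfl⟩, ?_⟩
  rintro d ⟨hd, m', hm', rfl⟩
  obtain ⟨i, hi, rfl⟩ := hbij.surjOn hm'
  exact fract_sub_add_one_mod_le (y := fun i => (u i : ℝ) * α) hmono hi hj (by rintro rfl; simp at hd)

theorem fract_step_mem_gapSet (hN : 2 ≤ N) (hbij : Set.BijOn u (Set.Iio N) (Set.Iio N))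
    (hmono : StrictMonoOn (fun j => Int.fract ((u j : ℝ) * α)) (Set.Iio N)) {j : ℕ} (hj : j < N) :
    Int.fract (step N u j * α) ∈ gapSet α N := by
  rw [← gapAt_apply_eq_fract_step hN hbij hmono hj, gapSet]
  exact Finset.mem_image.2 ⟨u j, Finset.mem_range.2 (hbij.mapsTo hj), rfl⟩

theorem apply_one_ne_zero (hN : 2 ≤ N) (hbij : Set.BijOn u (Set.Iio N) (Set.Iio N))
    (hu0 : u 0 = 0) : u 1 ≠ 0 := fun h =>
  absurd (hbij.injOn (show 1 ∈ Set.Iio N by simp; omega) (show 0 ∈ Set.Iio N by simp; omega)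
    (h.trans hu0.symm)) one_ne_zero

theorem apply_pred_ne_zero (hN : 2 ≤ N) (hbij : Set.BijOn u (Set.Iio N) (Set.Iio N))
    (hu0 : u 0 = 0) : u (N - 1) ≠ 0 := by
  have := hbij.injOn (show N - 1 < N by omega) (show 0 < N by omega)
  omega

theorem fract_apply_one_ne (hα : Irrational α) (hN : 2 ≤ N)
    (hbij : Set.BijOn u (Set.Iio N) (Set.Iio N)) (hu0 : u 0 = 0) :
    Int.fract (((u 1 : ℤ) : ℝ) * α) ≠ Int.fract (((-u (N - 1) : ℤ) : ℝ) * α) :=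
  hα.fract_intCast_mul_injective_s5.ne (by have := apply_one_ne_zero hN hbij hu0; omega)

theorem step_eq_or (hα : Irrational α) (hN : 2 ≤ N) (hbij : Set.BijOn u (Set.Iio N) (Set.Iio N))
    (hmono : StrictMonoOn (fun j => Int.fract ((u j : ℝ) * α)) (Set.Iio N))
    (hrel : (gapSet α N).card = 2) {j : ℕ} (hj : j < N) :
    step N u j = u 1 ∨ step N u j = -u (N - 1) := by
  have hu0 := apply_zero_eq_zero (by omega) hbij hmono
  have hpair : gapSet α N = {Int.fract (step N u 0 * α), Int.fract (step N u (N - 1) * α)} := by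
    refine (Finset.eq_of_subset_of_card_le (Finset.insert_subset_iff.2 ⟨?_, ?_⟩) ?_).symm
    · exact fract_step_mem_gapSet hN hbij hmono (by omega)
    · exact Finset.singleton_subset_iff.2 (fract_step_mem_gapSet hN hbij hmono (by omega))
    · rw [hrel, step_zero hN hu0, step_pred (by omega) hu0,
        Finset.card_pair (fract_apply_one_ne hα hN hbij hu0)]
  have hmem := fract_step_mem_gapSet hN hbij hmono hj
  rw [hpair, Finset.mem_insert, Finset.mem_singleton] at hmem
  rw [← step_zero hN hu0, ← step_pred (by omega) hu0]
  exact hmem.imp (hα.fract_intCast_mul_injective_s5 ·) (hα.fract_intCast_mul_injective_s5 ·)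

theorem step_eq_of_fract_lt (hα : Irrational α) (hN : 2 ≤ N)
    (hbij : Set.BijOn u (Set.Iio N) (Set.Iio N))
    (hmono : StrictMonoOn (fun j => Int.fract ((u j : ℝ) * α)) (Set.Iio N)) {k k' : ℤ}
    (hsteps : ∀ j < N, step N u j = k ∨ step N u j = k')
    (hlt : Int.fract (k * α) < Int.fract (k' * α)) (hk : k ≠ 0) {j : ℕ} (hj : j < N)
    (hk0 : 0 ≤ u j + k) (hkN : u j + k < N) : step N u j = k := by
  -- the gap at `u j` is at most `{k α}`, the distance to the point `u j + k`
  refine (hsteps j hj).resolve_right fun h => hlt.not_ge ?_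
  have hm' : (u j + k).toNat < N := by omega
  have hne : (u j + k).toNat ≠ u j := by omega
  have hle := gapAt_le hα hm' hne
  rwa [gapAt_apply_eq_fract_step hN hbij hmono hj, h,
    show ((u j + k).toNat : ℤ) - u j = k by omega] at hle

theorem step_greedy (hα : Irrational α) (hN : 2 ≤ N) (hbij : Set.BijOn u (Set.Iio N) (Set.Iio N))
    (hmono : StrictMonoOn (fun j => Int.fract ((u j : ℝ) * α)) (Set.Iio N))
    (hrel : (gapSet α N).card = 2) :
    (∀ j < N, u j + u 1 < N → step N u j = u 1) ∨
      (∀ j < N, u (N - 1) ≤ u j → step N u j = -u (N - 1)) := by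
  have hu0 := apply_zero_eq_zero (by omega) hbij hmono
  have hP := apply_one_ne_zero hN hbij hu0
  have hsteps := fun j (hj : j < N) => step_eq_or hα hN hbij hmono hrel hj
  have hQ := apply_pred_ne_zero hN hbij hu0
  rcases (fract_apply_one_ne hα hN hbij hu0).lt_or_gt with hlt | hlt
  · exact .inl fun j hj hjN =>
      step_eq_of_fract_lt hα hN hbij hmono hsteps hlt (by omega) hj (by omega) (by omega)
  · exact .inr fun j hj hjQ => step_eq_of_fract_lt hα hN hbij hmono
      (fun j hj => (hsteps j hj).symm) hlt (by omega) hj (by omega)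
      (by have : u j < N := hbij.mapsTo hj; omega)

theorem apply_one_add_apply_pred (hN : 2 ≤ N) (hbij : Set.BijOn u (Set.Iio N) (Set.Iio N))
    (hu0 : u 0 = 0) (hsteps : ∀ j < N, step N u j = u 1 ∨ step N u j = -u (N - 1))
    (hgreedy : (∀ j < N, u j + u 1 < N → step N u j = u 1) ∨
      (∀ j < N, u (N - 1) ≤ u j → step N u j = -u (N - 1))) :
    u 1 + u (N - 1) = N := by
  have hP := apply_one_ne_zero hN hbij hu0
  have hnext (j : ℕ) (hj : j < N) :
      (u ((j + 1) % N) : ℤ) = u j + step N u j ∧ u ((j + 1) % N) < N :=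
    ⟨by simp [step], hbij.mapsTo (Nat.mod_lt _ (by omega))⟩
  have hlast := step_pred (by omega : 0 < N) hu0
  have hPN : u 1 < N := hbij.mapsTo (show 1 < N by omega)
  rcases hgreedy with hfwd | hbwd
  · -- `N - u 1` cannot step forward, so `Q ≤ N - P`; `u (N - 1)` steps back, so `N ≤ Q + P`
    obtain ⟨j, hj : j < N, hjv⟩ := hbij.surjOn (show N - u 1 < N by omega)
    have := hnext j hj
    have := hfwd (N - 1) (by omega)
    rcases hsteps j hj with h | h <;> omega
  · -- `Q - 1` cannot step back, so `Q - 1 + P < N`; the point stepping forward to `N - 1`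
    -- lies below `Q`, so `N - 1 - P < Q`
    have hQ := apply_pred_ne_zero hN hbij hu0
    have hQN : u (N - 1) < N := hbij.mapsTo (show N - 1 < N by omega)
    obtain ⟨j, hj : j < N, hjv⟩ := hbij.surjOn (show u (N - 1) - 1 < N by omega)
    obtain ⟨i, hi : i < N, hiv⟩ := hbij.surjOn (show N - 1 < N by omega)
    have hi0 : i ≠ 0 := by rintro rfl; omega
    have hpred := hnext (i - 1) (by omega)
    rw [Nat.sub_add_cancel (Nat.pos_of_ne_zero hi0), Nat.mod_eq_of_lt hi] at hpred
    have := hnext j hj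
    have := hbwd (i - 1) (by omega)
    have : u (i - 1) < N := hbij.mapsTo (show i - 1 < N by omega)
    rcases hsteps j hj with h | h <;> rcases hsteps (i - 1) (by omega) with h' | h' <;> omega

end Relabeling

open Relabeling

theorem Nat.coprime_of_modEq_add_of_one_mem_image {N P : ℕ} {u : ℕ → ℕ}
    (h1 : 1 ∈ u '' Set.Iio N) (hu0 : u 0 = 0)
    (hstep : ∀ j, j + 1 < N → (u (j + 1) : ℤ) ≡ u j + P [ZMOD N]) : P.Coprime N := by
  have hmul (j : ℕ) (hj : j < N) : (u j : ZMod N) = j * P := by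
    induction j with
    | zero => simp [hu0]
    | succ j ih =>
      have := (ZMod.intCast_eq_intCast_iff _ _ _).2 (hstep j hj)
      push_cast at this
      rw [this, ih (by omega)]
      push_cast
      ring
  obtain ⟨j, hj, hj1⟩ := h1
  refine (ZMod.isUnit_iff_coprime P N).1 (IsUnit.of_mul_eq_one_right (j : ZMod N) ?_)
  rw [← hmul j hj, hj1, Nat.cast_one]

theorem relabeling_coprime (α : ℝ) (hα : Irrational α) (N : ℕ) (hN : 2 ≤ N)
    (u : ℕ → ℕ) (hbij : Set.BijOn u (Set.Iio N) (Set.Iio N))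
    (hmono : StrictMonoOn (fun j => Int.fract ((u j : ℝ) * α)) (Set.Iio N))
    (hrel : (gapSet α N).card = 2) :
    Nat.Coprime (u 1) N := by
  have hu0 := apply_zero_eq_zero (by omega) hbij hmono
  have hsteps := fun j (hj : j < N) => step_eq_or hα hN hbij hmono hrel hj
  have hPQ := apply_one_add_apply_pred hN hbij hu0 hsteps (step_greedy hα hN hbij hmono hrel)
  refine Nat.coprime_of_modEq_add_of_one_mem_image (hbij.surjOn (show 1 < N by omega)) hu0
    fun j hj => ?_
  have hnext : (u (j + 1) : ℤ) = u j + step N u j := by simp [step, Nat.mod_eq_of_lt hj]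
  rcases hsteps j (by omega) with h | h
  · exact Int.modEq_iff_dvd.2 ⟨0, by omega⟩
  · exact Int.modEq_iff_dvd.2 ⟨1, by omega⟩
end

section
/- If N is not a relabeling time (i.e., three distinct gap lengths occur for N points), then adding the point {Nα} splits one gap of the largest length Δ_3 into one gap of length Δ_1 and one gap of length Δ_2 (in one of the two possible orders); all other gaps are unchanged. -/
lemma Multiset.map_eq_cons_erase_map {ι β : Type*} [DecidableEq ι] [DecidableEq β]
    {s : Multiset ι} (hs : s.Nodup) {f g : ι → β} {i : ι} (hi : i ∈ s)
    (hfg : ∀ j ∈ s, j ≠ i → f j = g j) : s.map f = f i ::ₘ (s.map g).erase (g i) := by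
  conv_lhs => rw [← Multiset.cons_erase hi]
  rw [Multiset.map_cons, ← Multiset.map_erase_of_mem g s hi]
  refine congrArg _ (Multiset.map_congr rfl fun j hj => ?_)
  rw [hs.mem_erase_iff] at hj
  exact hfg j hj.2 hj.1

lemma eq_add_and_pair_eq_of_subset {G : Type*} [AddCommMonoid G] [LinearOrder G]
    [IsOrderedCancelAddMonoid G] {Δ₁ Δ₂ Δ₃ x y : G} (h12 : Δ₁ < Δ₂) (h23 : Δ₂ < Δ₃)
    (hx : 0 < x) (hy : 0 < y) (hsub : ({Δ₁, Δ₂, Δ₃} : Finset G) ⊆ {x, y, x + y})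
    (hmem : x + y ∈ ({Δ₁, Δ₂, Δ₃} : Finset G)) :
    Δ₃ = x + y ∧ (Δ₁ = x ∧ Δ₂ = y ∨ Δ₁ = y ∧ Δ₂ = x) := by
  have hxy : x < x + y := lt_add_of_pos_right x hy
  have hyx : y < x + y := lt_add_of_pos_left y hx
  simp only [Finset.insert_subset_iff, Finset.singleton_subset_iff, Finset.mem_insert,
    Finset.mem_singleton] at hsub hmem
  obtain ⟨h₁, h₂, h₃⟩ := hsub
  have hΔ₃ : Δ₃ = x + y := by
    rcases h₃ with h | h | h <;> rcases hmem with h' | h' | h' <;> order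
  refine ⟨hΔ₃, ?_⟩
  rcases h₁ with h | h | h <;> rcases h₂ with h' | h' | h' <;> first | order | tauto

namespace ThreeGap

noncomputable def fractMul (α : ℝ) (k : ℤ) : ℝ := Int.fract (k * α)

variable {α : ℝ}

lemma fractMul_nonneg (k : ℤ) : 0 ≤ fractMul α k := Int.fract_nonneg _

lemma fractMul_lt_one (k : ℤ) : fractMul α k < 1 := Int.fract_lt_one _

lemma fractMul_injective (hα : Irrational α) : Function.Injective (fractMul α) := by
  intro j k h
  obtain ⟨z, hz⟩ := Int.fract_eq_fract.1 h
  by_contra hjk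
  refine (hα.intCast_mul (sub_ne_zero.2 hjk)).ne_int z ?_
  push_cast
  linarith

lemma fractMul_pos (hα : Irrational α) {k : ℤ} (hk : k ≠ 0) : 0 < fractMul α k := by
  refine (fractMul_nonneg k).lt_of_ne fun h => hk (fractMul_injective hα ?_)
  rw [← h]
  simp [fractMul]

lemma fractMul_sub (j k : ℤ) : fractMul α (j - k) = Int.fract (fractMul α j - fractMul α k) := by
  rw [fractMul, fractMul, fractMul, Int.fract_eq_fract]
  exact ⟨⌊(j : ℝ) * α⌋ - ⌊(k : ℝ) * α⌋, by rw [Int.fract, Int.fract]; push_cast; ring⟩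

lemma fractMul_sub_of_le {j k : ℤ} (h : fractMul α k ≤ fractMul α j) :
    fractMul α (j - k) = fractMul α j - fractMul α k := by
  rw [fractMul_sub, Int.fract_eq_self]
  constructor <;> linarith [fractMul_lt_one (α := α) j, fractMul_nonneg (α := α) k]

lemma fractMul_sub_of_lt {j k : ℤ} (h : fractMul α j < fractMul α k) :
    fractMul α (j - k) = fractMul α j - fractMul α k + 1 := by
  rw [fractMul_sub, ← Int.fract_add_one, Int.fract_eq_self]
  constructor <;> linarith [fractMul_lt_one (α := α) k, fractMul_nonneg (α := α) j]

lemma fractMul_neg (hα : Irrational α) {k : ℤ} (hk : k ≠ 0) :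
    fractMul α (-k) = 1 - fractMul α k := by
  have h0 : fractMul α 0 = 0 := by simp [fractMul]
  rw [← zero_sub, fractMul_sub_of_lt (h0 ▸ fractMul_pos hα hk), h0]
  ring

lemma fractMul_add_of_lt_one {j k : ℤ} (h : fractMul α j + fractMul α k < 1) :
    fractMul α (j + k) = fractMul α j + fractMul α k := by
  rw [fractMul, Int.fract_eq_iff]
  refine ⟨by linarith [fractMul_nonneg (α := α) j, fractMul_nonneg (α := α) k], h,
    ⌊(j : ℝ) * α⌋ + ⌊(k : ℝ) * α⌋, ?_⟩
  rw [fractMul, fractMul, Int.fract, Int.fract]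
  push_cast
  ring

lemma fract_natCast_mul_sub (m' m : ℕ) :
    Int.fract ((m' : ℝ) * α - m * α) = fractMul α (m' - m) := by
  rw [fractMul]
  push_cast
  ring_nf

/-- Points `{m'α}` other than `{mα}` are indexed by the offset `k = m' - m`, with `k ≠ 0` and
`-m ≤ k < N - m`. -/
lemma fractMul_mem_offsets (hα : Irrational α) {N m : ℕ} {k : ℤ} (hk : k ≠ 0) (hkm : -m ≤ k)
    (hkN : k < N - m) :
    fractMul α k ∈ {d : ℝ | 0 < d ∧ ∃ m' : ℕ, m' < N ∧ Int.fract ((m' : ℝ) * α - m * α) = d} := by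
  refine ⟨fractMul_pos hα hk, (m + k).toNat, by omega, ?_⟩
  rw [fract_natCast_mul_sub]
  congr 1
  omega

lemma gapAt_le (hα : Irrational α) {N m : ℕ} {k : ℤ} (hk : k ≠ 0) (hkm : -m ≤ k)
    (hkN : k < N - m) : gapAt α N m ≤ fractMul α k :=
  csInf_le ⟨0, fun _ hd => hd.1.le⟩ (fractMul_mem_offsets hα hk hkm hkN)

lemma gapAt_eq (hα : Irrational α) {N m : ℕ} {k₀ : ℤ} (hk₀ : k₀ ≠ 0) (hk₀m : -m ≤ k₀)
    (hk₀N : k₀ < N - m)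
    (hle : ∀ k : ℤ, k ≠ 0 → -m ≤ k → k < N - m → fractMul α k₀ ≤ fractMul α k) :
    gapAt α N m = fractMul α k₀ := by
  refine le_antisymm (gapAt_le hα hk₀ hk₀m hk₀N)
    (le_csInf ⟨_, fractMul_mem_offsets hα hk₀ hk₀m hk₀N⟩ ?_)
  rintro d ⟨hd, m', hm', rfl⟩
  rw [fract_natCast_mul_sub] at hd ⊢
  refine hle _ (fun h => ?_) (by omega) (by omega)
  simp [h, fractMul] at hd

/-- `{aα}` is the nearest neighbour of `0` on its right among the `{kα}`, `0 < k < N`. -/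
def IsNearestRight (α : ℝ) (N a : ℕ) : Prop :=
  0 < a ∧ a < N ∧ ∀ k : ℤ, 0 < k → k < N → fractMul α a ≤ fractMul α k

/-- `{bα}` is the nearest neighbour of `0` on its left among the `{kα}`, `0 < k < N`. -/
def IsNearestLeft (α : ℝ) (N b : ℕ) : Prop :=
  0 < b ∧ b < N ∧ ∀ k : ℤ, 0 < k → k < N → fractMul α k ≤ fractMul α b

variable {N a b m : ℕ}

lemma exists_isNearestRight (α : ℝ) (hN : 1 < N) : ∃ a, IsNearestRight α N a := by
  obtain ⟨a, ha, hmin⟩ := (Finset.Ioo 0 N).exists_min_image (fun k : ℕ => fractMul α k)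
    ⟨1, Finset.mem_Ioo.2 ⟨one_pos, hN⟩⟩
  rw [Finset.mem_Ioo] at ha
  refine ⟨a, ha.1, ha.2, fun k hk hkN => ?_⟩
  lift k to ℕ using hk.le
  exact hmin k (Finset.mem_Ioo.2 ⟨by omega, by omega⟩)

lemma exists_isNearestLeft (α : ℝ) (hN : 1 < N) : ∃ b, IsNearestLeft α N b := by
  obtain ⟨b, hb, hmax⟩ := (Finset.Ioo 0 N).exists_max_image (fun k : ℕ => fractMul α k)
    ⟨1, Finset.mem_Ioo.2 ⟨one_pos, hN⟩⟩
  rw [Finset.mem_Ioo] at hb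
  refine ⟨b, hb.1, hb.2, fun k hk hkN => ?_⟩
  lift k to ℕ using hk.le
  exact hmax k (Finset.mem_Ioo.2 ⟨by omega, by omega⟩)

lemma IsNearestRight.lt (hα : Irrational α) (ha : IsNearestRight α N a) {k : ℤ} (hk : 0 < k)
    (hkN : k < N) (hka : k ≠ a) : fractMul α a < fractMul α k :=
  (ha.2.2 k hk hkN).lt_of_ne fun h => hka (fractMul_injective hα h).symm

lemma IsNearestLeft.lt (hα : Irrational α) (hb : IsNearestLeft α N b) {k : ℤ} (hk : 0 < k)
    (hkN : k < N) (hkb : k ≠ b) : fractMul α k < fractMul α b :=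
  (hb.2.2 k hk hkN).lt_of_ne fun h => hkb (fractMul_injective hα h)

lemma IsNearestRight.succ (ha : IsNearestRight α N a) (h : fractMul α a ≤ fractMul α N) :
    IsNearestRight α (N + 1) a := by
  refine ⟨ha.1, by have := ha.2.1; omega, fun k hk hkN => ?_⟩
  rcases (by omega : k < N ∨ k = N) with hkN | rfl
  exacts [ha.2.2 k hk hkN, h]

lemma IsNearestLeft.succ (hb : IsNearestLeft α N b) (h : fractMul α N ≤ fractMul α b) :
    IsNearestLeft α (N + 1) b := by
  refine ⟨hb.1, by have := hb.2.1; omega, fun k hk hkN => ?_⟩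
  rcases (by omega : k < N ∨ k = N) with hkN | rfl
  exacts [hb.2.2 k hk hkN, h]

lemma gapAt_of_add_lt (hα : Irrational α) (ha : IsNearestRight α N a) (hm : m + a < N) :
    gapAt α N m = fractMul α a := by
  have ⟨ha0, _, _⟩ := ha
  refine gapAt_eq hα (by omega) (by omega) (by omega) fun k hk hkm hkN => ?_
  rcases hk.lt_or_gt with hneg | hpos
  · by_contra! hlt
    have := ha.2.2 (a - k) (by omega) (by omega)
    rw [fractMul_sub_of_le hlt.le] at this
    linarith [fractMul_pos hα hk]
  · exact ha.2.2 k hpos (by omega)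

lemma gapAt_of_le (hα : Irrational α) (hb : IsNearestLeft α N b) (hm : m < N) (hbm : b ≤ m) :
    gapAt α N m = 1 - fractMul α b := by
  have ⟨hb0, _, _⟩ := hb
  rw [← fractMul_neg hα (by omega)]
  refine gapAt_eq hα (by omega) (by omega) (by omega) fun k hk hkm hkN => ?_
  rw [fractMul_neg hα (by omega)]
  rcases hk.lt_or_gt with hneg | hpos
  · rw [← neg_neg k, fractMul_neg hα (by omega)]
    linarith [hb.2.2 (-k) (by omega) (by omega)]
  · by_contra! hlt
    have := hb.2.2 (b + k) (by omega) (by omega)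
    rw [fractMul_add_of_lt_one (by linarith)] at this
    linarith [fractMul_pos hα hk]

lemma gapAt_of_lt_of_le (hα : Irrational α) (ha : IsNearestRight α N a)
    (hb : IsNearestLeft α N b) (hm : N ≤ m + a) (hmb : m < b) :
    gapAt α N m = fractMul α a + (1 - fractMul α b) := by
  have ⟨ha0, haN, _⟩ := ha
  have ⟨hb0, hbN, _⟩ := hb
  have hab : a ≠ b := by
    rintro rfl
    have : (1 : ℤ) = a := fractMul_injective hα
      (le_antisymm (hb.2.2 1 one_pos (by omega)) (ha.2.2 1 one_pos (by omega)))
    omega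
  have hfab : fractMul α a < fractMul α b := ha.lt hα (by omega) (by omega) (by omega)
  rw [show fractMul α a + (1 - fractMul α b) = fractMul α (a - b) by
    rw [fractMul_sub_of_lt hfab]; ring]
  refine gapAt_eq hα (by omega) (by omega) (by omega) fun k hk hkm hkN => ?_
  rw [fractMul_sub_of_lt hfab]
  rcases hk.lt_or_gt with hneg | hpos
  · by_contra! hlt
    have hkb := hb.lt hα (k := -k) (by omega) (by omega) (by omega)
    have := ha.2.2 (b - -k) (by omega) (by omega)
    rw [fractMul_sub_of_le hkb.le, fractMul_neg hα hk] at this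
    linarith
  · by_contra! hlt
    have hak := ha.lt hα hpos (by omega) (by omega)
    have := hb.2.2 (a - k) (by omega) (by omega)
    rw [fractMul_sub_of_lt hak] at this
    linarith

noncomputable def threeGap (α : ℝ) (N a b m : ℕ) : ℝ :=
  if m + a < N then fractMul α a
  else if b ≤ m then 1 - fractMul α b
  else fractMul α a + (1 - fractMul α b)

lemma gapAt_eq_threeGap (hα : Irrational α) (ha : IsNearestRight α N a)
    (hb : IsNearestLeft α N b) (hm : m < N) : gapAt α N m = threeGap α N a b m := by
  unfold threeGap
  split_ifs with h₁ h₂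
  · exact gapAt_of_add_lt hα ha h₁
  · exact gapAt_of_le hα hb hm h₂
  · exact gapAt_of_lt_of_le hα ha hb (by omega) (by omega)

lemma gapSet_subset (hα : Irrational α) (ha : IsNearestRight α N a) (hb : IsNearestLeft α N b) :
    gapSet α N ⊆ {fractMul α a, 1 - fractMul α b, fractMul α a + (1 - fractMul α b)} := by
  intro x hx
  obtain ⟨m, hm, rfl⟩ := Finset.mem_image.1 hx
  rw [gapAt_eq_threeGap hα ha hb (Finset.mem_range.1 hm), threeGap]
  split_ifs <;> simp

lemma lt_add_of_two_lt_card_gapSet (hα : Irrational α) (ha : IsNearestRight α N a)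
    (hb : IsNearestLeft α N b) (hcard : 2 < (gapSet α N).card) : N < a + b := by
  by_contra! hab
  have hsub : gapSet α N ⊆ {fractMul α a, 1 - fractMul α b} := by
    intro x hx
    obtain ⟨m, hm, rfl⟩ := Finset.mem_image.1 hx
    rw [gapAt_eq_threeGap hα ha hb (Finset.mem_range.1 hm), threeGap]
    split_ifs <;> first | omega | simp
  exact hcard.not_ge ((Finset.card_le_card hsub).trans Finset.card_le_two)

lemma gapAt_sub_eq (hα : Irrational α) (ha : IsNearestRight α N a) (hb : IsNearestLeft α N b)
    (hab : N < a + b) : gapAt α N (N - a) = fractMul α a + (1 - fractMul α b) := by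
  have ⟨ha0, haN, _⟩ := ha
  rw [gapAt_eq_threeGap hα ha hb (by omega), threeGap, if_neg (by omega), if_neg (by omega)]

lemma fractMul_mem_Icc (hα : Irrational α) (ha : IsNearestRight α N a)
    (hb : IsNearestLeft α N b) (hab : N < a + b) :
    fractMul α N ∈ Set.Icc (fractMul α a) (fractMul α b) := by
  have ⟨ha0, haN, _⟩ := ha
  have hgap : gapAt α N (N - a) ≤ fractMul α (-(N - a : ℕ)) :=
    gapAt_le hα (by omega) le_rfl (by omega)
  rw [gapAt_sub_eq hα ha hb hab, fractMul_neg hα (by omega)] at hgap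
  have hN : fractMul α N = fractMul α (N - a : ℕ) + fractMul α a := by
    rw [← fractMul_add_of_lt_one (by linarith [fractMul_lt_one (α := α) b])]
    congr 1
    omega
  constructor <;> linarith [fractMul_nonneg (α := α) (N - a : ℕ)]

lemma gapMult_succ (hα : Irrational α) (ha : IsNearestRight α N a) (hb : IsNearestLeft α N b)
    (hab : N < a + b) :
    gapMult α (N + 1) = (gapMult α N).erase (fractMul α a + (1 - fractMul α b)) +
      {fractMul α a, 1 - fractMul α b} := by
  have ⟨ha0, haN, _⟩ := ha
  have ⟨_, hbN, _⟩ := hb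
  obtain ⟨hleN, hNle⟩ := fractMul_mem_Icc hα ha hb hab
  have ha' := ha.succ hleN
  have hb' := hb.succ hNle
  have hsame : ∀ m ∈ Multiset.range N, m ≠ N - a → gapAt α (N + 1) m = gapAt α N m := by
    intro m hm hne
    rw [Multiset.mem_range] at hm
    rw [gapAt_eq_threeGap hα ha' hb' (by omega), gapAt_eq_threeGap hα ha hb hm, threeGap, threeGap]
    split_ifs <;> first | rfl | omega
  rw [gapMult, gapMult, Multiset.range_succ, Multiset.map_cons,
    Multiset.map_eq_cons_erase_map (Multiset.nodup_range N) (Multiset.mem_range.2 (by omega)) hsame,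
    gapAt_sub_eq hα ha hb hab, gapAt_eq_threeGap hα ha' hb' (by omega),
    gapAt_eq_threeGap hα ha' hb' (by omega), threeGap, threeGap, if_neg (by omega),
    if_pos (by omega), if_pos (by omega), Multiset.pair_comm, Multiset.insert_eq_cons,
    Multiset.add_cons, add_comm _ ({_} : Multiset ℝ), Multiset.singleton_add]

end ThreeGap

open ThreeGap in
open Classical in
theorem new_point_splits_largest_gap (α : ℝ) (hα : Irrational α) (N : ℕ)
    (Δ₁ Δ₂ Δ₃ : ℝ) (h12 : Δ₁ < Δ₂) (h23 : Δ₂ < Δ₃)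
    (hset : gapSet α N = {Δ₁, Δ₂, Δ₃}) :
    (∃ m < N, gapAt α N m = Δ₃ ∧
      0 < Int.fract ((N : ℝ) * α - (m : ℝ) * α) ∧
      Int.fract ((N : ℝ) * α - (m : ℝ) * α) < Δ₃ ∧
      ({Int.fract ((N : ℝ) * α - (m : ℝ) * α),
        Δ₃ - Int.fract ((N : ℝ) * α - (m : ℝ) * α)} : Set ℝ) = {Δ₁, Δ₂}) ∧
    gapMult α (N + 1) = (gapMult α N).erase Δ₃ + {Δ₁, Δ₂} := by
  have hcard : 2 < (gapSet α N).card := by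
    rw [hset, Finset.card_eq_three.2 ⟨Δ₁, Δ₂, Δ₃, h12.ne, (h12.trans h23).ne, h23.ne, rfl⟩]
    norm_num
  have hN : 2 < N := hcard.trans_le (Finset.card_image_le.trans (Finset.card_range N).le)
  obtain ⟨a, ha⟩ := exists_isNearestRight α (by omega : 1 < N)
  obtain ⟨b, hb⟩ := exists_isNearestLeft α (by omega : 1 < N)
  have ⟨ha0, haN, _⟩ := ha
  have hab := lt_add_of_two_lt_card_gapSet hα ha hb hcard
  have hgap := gapAt_sub_eq hα ha hb hab
  obtain ⟨hΔ₃, hΔ₁₂⟩ := eq_add_and_pair_eq_of_subset h12 h23 (fractMul_pos hα (by omega))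
    (sub_pos.2 (fractMul_lt_one b)) (hset ▸ gapSet_subset hα ha hb)
    (hset ▸ hgap ▸ Finset.mem_image_of_mem _ (Finset.mem_range.2 (by omega)))
  have hfract : Int.fract ((N : ℝ) * α - ((N - a : ℕ) : ℝ) * α) = fractMul α a := by
    rw [fract_natCast_mul_sub]
    congr 1
    omega
  refine ⟨⟨N - a, by omega, hgap.trans hΔ₃.symm, ?_, ?_, ?_⟩, ?_⟩
  · rw [hfract]
    exact fractMul_pos hα (by omega)
  · rw [hfract, hΔ₃]
    linarith [fractMul_lt_one (α := α) b]
  · rw [hfract, hΔ₃, add_sub_cancel_left]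
    rcases hΔ₁₂ with ⟨rfl, rfl⟩ | ⟨rfl, rfl⟩
    exacts [rfl, Set.pair_comm _ _]
  · rw [gapMult_succ hα ha hb hab, ← hΔ₃]
    rcases hΔ₁₂ with ⟨rfl, rfl⟩ | ⟨rfl, rfl⟩
    exacts [rfl, by rw [Multiset.pair_comm]]
end

section
/- At a relabeling time N, with u_j ≡ j·u_1 (mod N) and J the index such that u_J = N - 1, one has u_{J-k} + u_{J+k} = N - 2 for all k = 1, ..., N-2 (indices taken mod N). -/
/-!
Let `r` and `s` be the indices in `[1, N - 1]` at which `{dα}` is smallest and largest. The point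
`{mα}` is followed on the circle at distance `{rα}` when `m + r < N`, at distance `1 - {sα}` when
`s ≤ m`, and at distance `{rα} + 1 - {sα}` when `N - r ≤ m < s` (three-gap theorem). These three
lengths are distinct and `r + s ≥ N` always, so at a relabeling time `r + s = N`. Then the point
after `{mα}` is always `{((m + r) mod N) α}`, so `u_j ≡ j r (mod N)`, and `u_J = N - 1` says
`J r ≡ -1`. Hence `u_{J-k} + u_{J+k} ≡ -2 (mod N)`; the sum can only be `N - 2` or `2N - 2`, and
the latter would need `u_{J-k} = N - 1 = u_J`, i.e. `k r ≡ 0`, i.e. `N ∣ k`.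
-/

open Set

namespace Int

variable {k : Type*} [Field k] [LinearOrder k] [IsStrictOrderedRing k] [FloorRing k] {a b : k}

theorem fract_add_of_lt_one (h : fract a + fract b < 1) : fract (a + b) = fract a + fract b :=
  fract_eq_iff.2 ⟨add_nonneg (fract_nonneg a) (fract_nonneg b), h, ⌊a⌋ + ⌊b⌋, by
    simp only [fract]; push_cast; ring⟩

theorem fract_add_of_one_le (h : 1 ≤ fract a + fract b) :
    fract (a + b) = fract a + fract b - 1 :=
  fract_eq_iff.2 ⟨by linarith, by linarith [fract_lt_one a, fract_lt_one b], ⌊a⌋ + ⌊b⌋ + 1, by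
    simp only [fract]; push_cast; ring⟩

theorem fract_sub_of_le (h : fract b ≤ fract a) : fract (a - b) = fract a - fract b :=
  fract_eq_iff.2 ⟨sub_nonneg.2 h, by linarith [fract_lt_one a, fract_nonneg b], ⌊a⌋ - ⌊b⌋, by
    simp only [fract]; push_cast; ring⟩

theorem fract_sub_of_lt (h : fract a < fract b) : fract (a - b) = fract a - fract b + 1 :=
  fract_eq_iff.2 ⟨by linarith [fract_nonneg a, fract_lt_one b], by linarith, ⌊a⌋ - ⌊b⌋ - 1, by
    simp only [fract]; push_cast; ring⟩

end Int

noncomputable def orbitPt (α : ℝ) (d : ℤ) : ℝ := Int.fract (d * α)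

section OrbitPt

variable {α : ℝ}

@[simp]
theorem orbitPt_zero (α : ℝ) : orbitPt α 0 = 0 := by simp [orbitPt]

theorem orbitPt_nonneg (α : ℝ) (d : ℤ) : 0 ≤ orbitPt α d := Int.fract_nonneg _

theorem orbitPt_lt_one (α : ℝ) (d : ℤ) : orbitPt α d < 1 := Int.fract_lt_one _

theorem orbitPt_add_of_lt_one {a b : ℤ} (h : orbitPt α a + orbitPt α b < 1) :
    orbitPt α (a + b) = orbitPt α a + orbitPt α b := by
  simpa only [orbitPt, Int.cast_add, add_mul] using Int.fract_add_of_lt_one h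

theorem orbitPt_add_of_one_le {a b : ℤ} (h : 1 ≤ orbitPt α a + orbitPt α b) :
    orbitPt α (a + b) = orbitPt α a + orbitPt α b - 1 := by
  simpa only [orbitPt, Int.cast_add, add_mul] using Int.fract_add_of_one_le h

theorem orbitPt_sub_of_le {a b : ℤ} (h : orbitPt α b ≤ orbitPt α a) :
    orbitPt α (a - b) = orbitPt α a - orbitPt α b := by
  simpa only [orbitPt, Int.cast_sub, sub_mul] using Int.fract_sub_of_le h

theorem orbitPt_sub_of_lt {a b : ℤ} (h : orbitPt α a < orbitPt α b) :
    orbitPt α (a - b) = orbitPt α a - orbitPt α b + 1 := by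
  simpa only [orbitPt, Int.cast_sub, sub_mul] using Int.fract_sub_of_lt h

theorem orbitPt_pos (hα : Irrational α) {d : ℤ} (hd : d ≠ 0) : 0 < orbitPt α d :=
  (orbitPt_nonneg α d).lt_of_ne' <| Int.fract_ne_zero_iff.2 fun ⟨z, hz⟩ =>
    (hα.intCast_mul hd).ne_int z hz.symm

theorem orbitPt_neg (hα : Irrational α) {d : ℤ} (hd : d ≠ 0) :
    orbitPt α (-d) = 1 - orbitPt α d := by
  simpa only [orbitPt, Int.cast_neg, neg_mul] using Int.fract_neg (orbitPt_pos hα hd).ne'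

theorem orbitPt_injective (hα : Irrational α) : Function.Injective (orbitPt α) := by
  intro a b h
  by_contra hne
  have := orbitPt_sub_of_le h.ge
  linarith [orbitPt_pos hα (sub_ne_zero.2 hne)]

end OrbitPt

/-- `orbitPt α (m' - m)` is the distance from `{mα}` forward (counterclockwise) to `{m'α}`. -/
def IsGapLowerBound (α : ℝ) (N : ℕ) (m : ℤ) (c : ℝ) : Prop :=
  ∀ m' ∈ Ico (0 : ℤ) N, m' ≠ m → c ≤ orbitPt α (m' - m)

section ThreeGap

variable {α : ℝ} {N : ℕ} {r s : ℤ}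

theorem orbitPt_add_of_isMinOn (hrmin : IsMinOn (orbitPt α) (Icc 1 ((N : ℤ) - 1)) r) {d : ℤ}
    (hd : d + r ∈ Icc 1 ((N : ℤ) - 1)) : orbitPt α (d + r) = orbitPt α d + orbitPt α r := by
  by_contra h
  have := orbitPt_add_of_one_le (not_lt.1 (mt orbitPt_add_of_lt_one h))
  linarith [isMinOn_iff.1 hrmin _ hd, orbitPt_lt_one α d]

theorem orbitPt_add_of_isMaxOn (hα : Irrational α)
    (hsmax : IsMaxOn (orbitPt α) (Icc 1 ((N : ℤ) - 1)) s) {d : ℤ} (hd0 : d ≠ 0)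
    (hd : d + s ∈ Icc 1 ((N : ℤ) - 1)) : orbitPt α (d + s) = orbitPt α d + orbitPt α s - 1 := by
  by_contra h
  have := orbitPt_add_of_lt_one (not_le.1 (mt orbitPt_add_of_one_le h))
  linarith [isMaxOn_iff.1 hsmax _ hd, orbitPt_pos hα hd0]

theorem one_sub_le_orbitPt_of_isMaxOn (hα : Irrational α)
    (hsmax : IsMaxOn (orbitPt α) (Icc 1 ((N : ℤ) - 1)) s) {e : ℤ}
    (he : -e ∈ Icc 1 ((N : ℤ) - 1)) : 1 - orbitPt α s ≤ orbitPt α e := by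
  have := orbitPt_neg hα (d := -e) (by obtain ⟨he1, -⟩ := he; omega)
  rw [neg_neg] at this
  linarith [isMaxOn_iff.1 hsmax _ he]

theorem natCast_le_add_of_isMinOn_of_isMaxOn (hα : Irrational α)
    (hr : r ∈ Icc 1 ((N : ℤ) - 1)) (hrmin : IsMinOn (orbitPt α) (Icc 1 ((N : ℤ) - 1)) r)
    (hs : s ∈ Icc 1 ((N : ℤ) - 1)) (hsmax : IsMaxOn (orbitPt α) (Icc 1 ((N : ℤ) - 1)) s) :
    (N : ℤ) ≤ r + s := by
  by_contra h
  obtain ⟨hr1, -⟩ := hr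
  obtain ⟨hs1, -⟩ := hs
  have h₁ := orbitPt_add_of_isMinOn hrmin (d := s) ⟨by omega, by omega⟩
  have h₂ := orbitPt_add_of_isMaxOn hα hsmax (d := r) (by omega) ⟨by omega, by omega⟩
  rw [add_comm] at h₁
  linarith

theorem isGapLowerBound_of_add_lt (hα : Irrational α) (hr : r ∈ Icc 1 ((N : ℤ) - 1))
    (hrmin : IsMinOn (orbitPt α) (Icc 1 ((N : ℤ) - 1)) r) {m : ℤ} (hm : 0 ≤ m)
    (hmr : m + r < N) : IsGapLowerBound α N m (orbitPt α r) := by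
  rintro m' ⟨hm'0, hm'N⟩ hne
  obtain ⟨hr1, hrN⟩ := hr
  rcases lt_or_gt_of_ne hne with hlt | hgt
  · have hadd := orbitPt_add_of_isMinOn hrmin (d := m - m') ⟨by omega, by omega⟩
    have hneg := orbitPt_neg hα (d := m - m') (by omega)
    rw [neg_sub] at hneg
    linarith [orbitPt_lt_one α (m - m' + r)]
  · exact isMinOn_iff.1 hrmin _ ⟨by omega, by omega⟩

theorem isGapLowerBound_of_le (hα : Irrational α) (hs : s ∈ Icc 1 ((N : ℤ) - 1))
    (hsmax : IsMaxOn (orbitPt α) (Icc 1 ((N : ℤ) - 1)) s) {m : ℤ} (hsm : s ≤ m)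
    (hm : m < N) : IsGapLowerBound α N m (1 - orbitPt α s) := by
  rintro m' ⟨hm'0, hm'N⟩ hne
  obtain ⟨hs1, hsN⟩ := hs
  rcases lt_or_gt_of_ne hne with hlt | hgt
  · exact one_sub_le_orbitPt_of_isMaxOn hα hsmax ⟨by omega, by omega⟩
  · have hadd := orbitPt_add_of_isMaxOn hα hsmax (d := m' - m) (by omega) ⟨by omega, by omega⟩
    linarith [orbitPt_nonneg α (m' - m + s)]

theorem isGapLowerBound_of_mem_Ico (hα : Irrational α)
    (hr : r ∈ Icc 1 ((N : ℤ) - 1)) (hrmin : IsMinOn (orbitPt α) (Icc 1 ((N : ℤ) - 1)) r)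
    (hs : s ∈ Icc 1 ((N : ℤ) - 1))
    (hsmax : IsMaxOn (orbitPt α) (Icc 1 ((N : ℤ) - 1)) s) {m : ℤ} (hm : N ≤ m + r)
    (hms : m < s) : IsGapLowerBound α N m (orbitPt α r + (1 - orbitPt α s)) := by
  rintro m' ⟨hm'0, hm'N⟩ hne
  obtain ⟨hr1, hrN⟩ := hr
  obtain ⟨hs1, hsN⟩ := hs
  rcases lt_or_gt_of_ne hne with hlt | hgt
  · have hle : orbitPt α (m - m') ≤ orbitPt α s := isMaxOn_iff.1 hsmax _ ⟨by omega, by omega⟩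
    have hsub := orbitPt_sub_of_le hle
    have hmin := isMinOn_iff.1 hrmin (s - (m - m')) ⟨by omega, by omega⟩
    have hneg := orbitPt_neg hα (d := m - m') (by omega)
    rw [neg_sub] at hneg
    linarith
  · have hle : orbitPt α r ≤ orbitPt α (m' - m) := isMinOn_iff.1 hrmin _ ⟨by omega, by omega⟩
    have hsub := orbitPt_sub_of_le hle
    have hback := one_sub_le_orbitPt_of_isMaxOn hα hsmax (e := m' - m - r) ⟨by omega, by omega⟩
    linarith

end ThreeGap

section GapSet

variable {α : ℝ} {N : ℕ} {r s : ℤ}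

theorem gapAt_eq_of_isGapLowerBound (m : ℕ) {m' : ℤ} (hm' : m' ∈ Ico (0 : ℤ) N) {c : ℝ}
    (hc : orbitPt α (m' - m) = c) (hc0 : 0 < c) (hlb : IsGapLowerBound α N m c) :
    gapAt α N m = c := by
  obtain ⟨hm'0, hm'N⟩ := hm'
  have hdist (n : ℕ) : Int.fract ((n : ℝ) * α - m * α) = orbitPt α (n - m) := by
    simp [orbitPt, sub_mul]
  refine IsLeast.csInf_eq ⟨⟨hc0, m'.toNat, by omega, ?_⟩, ?_⟩
  · rw [hdist, Int.toNat_of_nonneg hm'0, hc]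
  · rintro x ⟨hx, n, hn, rfl⟩
    rw [hdist] at hx ⊢
    refine hlb n ⟨by omega, by omega⟩ fun h => ?_
    rw [h, sub_self, orbitPt_zero] at hx
    exact hx.false

theorem orbitPt_lt_of_lt_add (hα : Irrational α)
    (hr : r ∈ Icc 1 ((N : ℤ) - 1)) (hrmin : IsMinOn (orbitPt α) (Icc 1 ((N : ℤ) - 1)) r)
    (hs : s ∈ Icc 1 ((N : ℤ) - 1)) (hsmax : IsMaxOn (orbitPt α) (Icc 1 ((N : ℤ) - 1)) s)
    (hlt : N < r + s) : orbitPt α r < orbitPt α s := by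
  refine (isMinOn_iff.1 hrmin s hs).lt_of_ne fun h => ?_
  have hN : 1 ≤ (N : ℤ) - 1 := hr.1.trans hr.2
  -- otherwise `orbitPt α` would be constant on `[1, N - 1]`, forcing `N = 2`
  have hconst (d : ℤ) (hd : d ∈ Icc 1 ((N : ℤ) - 1)) : d = r :=
    orbitPt_injective hα <| le_antisymm (h ▸ isMaxOn_iff.1 hsmax d hd) (isMinOn_iff.1 hrmin d hd)
  have h₁ := hconst 1 ⟨le_rfl, by omega⟩
  have h₂ := hconst ((N : ℤ) - 1) ⟨by omega, le_rfl⟩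
  have h₃ := hconst s hs
  omega

theorem three_le_card_gapSet (hα : Irrational α)
    (hr : r ∈ Icc 1 ((N : ℤ) - 1)) (hrmin : IsMinOn (orbitPt α) (Icc 1 ((N : ℤ) - 1)) r)
    (hs : s ∈ Icc 1 ((N : ℤ) - 1)) (hsmax : IsMaxOn (orbitPt α) (Icc 1 ((N : ℤ) - 1)) s)
    (hlt : N < r + s) : 3 ≤ (gapSet α N).card := by
  obtain ⟨hr1, hrN⟩ := hr
  obtain ⟨hs1, hsN⟩ := hs
  have hr0 : 0 < orbitPt α r := orbitPt_pos hα (by omega)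
  have hs0 : 0 < 1 - orbitPt α s := by linarith [orbitPt_lt_one α s]
  have hgap₁ : gapAt α N 0 = orbitPt α r :=
    gapAt_eq_of_isGapLowerBound 0 (m' := r) ⟨by omega, by omega⟩ (by simp) hr0
      (isGapLowerBound_of_add_lt hα ⟨hr1, hrN⟩ hrmin le_rfl (by omega))
  have hgap₂ : gapAt α N (N - 1) = 1 - orbitPt α s :=
    gapAt_eq_of_isGapLowerBound (N - 1) (m' := N - 1 - s) ⟨by omega, by omega⟩
      (by rw [show (N : ℤ) - 1 - s - ((N - 1 : ℕ) : ℤ) = -s by omega, orbitPt_neg hα (by omega)])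
      hs0 (isGapLowerBound_of_le hα ⟨hs1, hsN⟩ hsmax (by omega) (by omega))
  have hgap₃ : gapAt α N (N - r).toNat = orbitPt α r + (1 - orbitPt α s) :=
    gapAt_eq_of_isGapLowerBound (N - r).toNat (m' := N - s) ⟨by omega, by omega⟩
      (by
        rw [show (N : ℤ) - s - ((N - r).toNat : ℕ) = r - s by omega,
          orbitPt_sub_of_lt (orbitPt_lt_of_lt_add hα ⟨hr1, hrN⟩ hrmin ⟨hs1, hsN⟩ hsmax hlt)]
        ring)
      (by linarith)
      (isGapLowerBound_of_mem_Ico hα ⟨hr1, hrN⟩ hrmin ⟨hs1, hsN⟩ hsmax (by omega) (by omega))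
  have hne : orbitPt α r ≠ 1 - orbitPt α s := fun h => by
    have := orbitPt_add_of_one_le (α := α) (a := r) (b := s) (by linarith)
    linarith [orbitPt_pos hα (d := r + s) (by omega)]
  have hmem (n : ℕ) (hn : n < N) : gapAt α N n ∈ gapSet α N :=
    Finset.mem_image_of_mem _ (Finset.mem_range.2 hn)
  refine Finset.two_lt_card.2 ⟨_, hgap₁ ▸ hmem 0 (by omega), _, hgap₂ ▸ hmem (N - 1) (by omega),
    _, hgap₃ ▸ hmem _ (by omega), hne, ?_, ?_⟩ <;> intro h <;> linarith

theorem add_eq_of_card_gapSet_eq_two (hα : Irrational α)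
    (hr : r ∈ Icc 1 ((N : ℤ) - 1)) (hrmin : IsMinOn (orbitPt α) (Icc 1 ((N : ℤ) - 1)) r)
    (hs : s ∈ Icc 1 ((N : ℤ) - 1)) (hsmax : IsMaxOn (orbitPt α) (Icc 1 ((N : ℤ) - 1)) s)
    (hcard : (gapSet α N).card = 2) : r + s = N := by
  have := natCast_le_add_of_isMinOn_of_isMaxOn hα hr hrmin hs hsmax
  by_contra hne
  have := three_le_card_gapSet hα hr hrmin hs hsmax (by omega)
  omega

end GapSet

section Sorting

variable {β : Type*} [LinearOrder β] {f : ℕ → β} {u : ℕ → ℕ} {N : ℕ}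

theorem Set.BijOn.apply_zero_eq_of_strictMonoOn (hbij : BijOn u (Iio N) (Iio N))
    (hmono : StrictMonoOn (f ∘ u) (Iio N)) {m : ℕ} (hm : m < N) (hmin : ∀ n < N, f m ≤ f n) :
    u 0 = m := by
  obtain ⟨i, hi, rfl⟩ := hbij.surjOn hm
  have hN : 0 ∈ Iio N := (Nat.zero_le i).trans_lt hi
  obtain rfl | hi0 := Nat.eq_zero_or_pos i
  · rfl
  · exact absurd (hmin _ (hbij.mapsTo hN)) (not_le.2 (hmono hN hi hi0))

theorem Set.BijOn.apply_succ_eq_of_strictMonoOn (hbij : BijOn u (Iio N) (Iio N))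
    (hmono : StrictMonoOn (f ∘ u) (Iio N)) {j m : ℕ} (hj : j + 1 < N) (hm : m < N)
    (hlt : f (u j) < f m) (hgap : ∀ n < N, f n ∉ Ioo (f (u j)) (f m)) : u (j + 1) = m := by
  obtain ⟨i, hi, rfl⟩ := hbij.surjOn hm
  have hj' : j ∈ Iio N := (Nat.lt_succ_self j).trans hj
  have hji : j < i := (hmono.lt_iff_lt hj' hi).1 hlt
  have hle : f (u (j + 1)) ≤ f (u i) := (hmono.le_iff_le hj hi).2 hji
  have hsucc : f (u j) < f (u (j + 1)) := hmono hj' hj (Nat.lt_succ_self j)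
  have heq : f (u (j + 1)) = f (u i) :=
    hle.antisymm (not_lt.1 fun h => hgap _ (hbij.mapsTo hj) ⟨hsucc, h⟩)
  rw [hmono.injOn hj hi heq]

end Sorting

section Relabeling

variable {α : ℝ} {N : ℕ} {r s : ℤ}

theorem orbitPt_notMem_Ioo {m : ℤ} {c : ℝ} (hlb : IsGapLowerBound α N m c) {m' : ℤ}
    (hm' : m' ∈ Ico (0 : ℤ) N) : orbitPt α m' ∉ Ioo (orbitPt α m) (orbitPt α m + c) := by
  rintro ⟨h₁, h₂⟩
  have hne : m' ≠ m := by rintro rfl; exact h₁.false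
  linarith [orbitPt_sub_of_le h₁.le, hlb m' hm' hne]

theorem exists_orbitPt_emod_add (hα : Irrational α)
    (hr : r ∈ Icc 1 ((N : ℤ) - 1)) (hrmin : IsMinOn (orbitPt α) (Icc 1 ((N : ℤ) - 1)) r)
    (hs : s ∈ Icc 1 ((N : ℤ) - 1)) (hsmax : IsMaxOn (orbitPt α) (Icc 1 ((N : ℤ) - 1)) s)
    (hrs : r + s = N) {m : ℤ} (hm : m ∈ Ico (0 : ℤ) N) (hms : m ≠ s) :
    ∃ c, 0 < c ∧ orbitPt α ((m + r) % N) = orbitPt α m + c ∧ IsGapLowerBound α N m c := by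
  obtain ⟨hm0, hmN⟩ := hm
  obtain ⟨hr1, hrN⟩ := hr
  rcases lt_or_ge (m + r) N with hlt | hge
  · refine ⟨orbitPt α r, orbitPt_pos hα (by omega), ?_,
      isGapLowerBound_of_add_lt hα ⟨hr1, hrN⟩ hrmin hm0 hlt⟩
    rw [Int.emod_eq_of_lt (by omega) hlt]
    exact orbitPt_add_of_isMinOn hrmin ⟨by omega, by omega⟩
  · refine ⟨1 - orbitPt α s, by linarith [orbitPt_lt_one α s], ?_,
      isGapLowerBound_of_le hα hs hsmax (by omega) hmN⟩
    have hwrap : (m + r) % N = m - s := by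
      rw [show m + r = m - s + N by omega, Int.add_emod_right,
        Int.emod_eq_of_lt (by omega) (by omega)]
    have hadd := orbitPt_add_of_isMaxOn hα hsmax (d := m - s) (by omega)
      (by rw [sub_add_cancel]; exact ⟨by omega, by omega⟩)
    rw [sub_add_cancel] at hadd
    rw [hwrap]
    linarith

variable {u : ℕ → ℕ}

theorem apply_succ_eq_emod_add (hα : Irrational α)
    (hr : r ∈ Icc 1 ((N : ℤ) - 1)) (hrmin : IsMinOn (orbitPt α) (Icc 1 ((N : ℤ) - 1)) r)
    (hs : s ∈ Icc 1 ((N : ℤ) - 1)) (hsmax : IsMaxOn (orbitPt α) (Icc 1 ((N : ℤ) - 1)) s)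
    (hrs : r + s = N) (hbij : BijOn u (Iio N) (Iio N))
    (hmono : StrictMonoOn (fun j => orbitPt α (u j)) (Iio N)) {j : ℕ} (hj : j + 1 < N) :
    (u (j + 1) : ℤ) = (u j + r) % N := by
  have hj' : j ∈ Iio N := (Nat.lt_succ_self j).trans hj
  have huj : u j < N := hbij.mapsTo hj'
  have hsucc : orbitPt α (u j) < orbitPt α (u (j + 1)) := hmono hj' hj (Nat.lt_succ_self j)
  have hujs : (u j : ℤ) ≠ s := by
    intro h
    have h0 : u (j + 1) ≠ 0 := fun h0 => by
      rw [h0, Nat.cast_zero, orbitPt_zero] at hsucc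
      exact (orbitPt_nonneg α _).not_gt hsucc
    have : u (j + 1) < N := hbij.mapsTo hj
    have := isMaxOn_iff.1 hsmax (u (j + 1)) ⟨by omega, by omega⟩
    rw [h] at hsucc
    exact this.not_gt hsucc
  obtain ⟨c, hc0, hcval, hlb⟩ :=
    exists_orbitPt_emod_add hα hr hrmin hs hsmax hrs ⟨Int.natCast_nonneg _, by omega⟩ hujs
  have hnext_nonneg : 0 ≤ ((u j : ℤ) + r) % N := Int.emod_nonneg _ (by omega)
  have hnext_lt : ((u j : ℤ) + r) % N < N := Int.emod_lt_of_pos _ (by omega)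
  have := hbij.apply_succ_eq_of_strictMonoOn (f := fun n : ℕ => orbitPt α n) hmono hj
    (m := (((u j : ℤ) + r) % N).toNat) (by omega)
    (by simp only [Int.toNat_of_nonneg hnext_nonneg, hcval]; linarith)
    (fun n hn => by
      simp only [Int.toNat_of_nonneg hnext_nonneg, hcval]
      exact orbitPt_notMem_Ioo hlb ⟨Int.natCast_nonneg n, by omega⟩)
  rw [this, Int.toNat_of_nonneg hnext_nonneg]

theorem apply_eq_mul_emod (hα : Irrational α)
    (hr : r ∈ Icc 1 ((N : ℤ) - 1)) (hrmin : IsMinOn (orbitPt α) (Icc 1 ((N : ℤ) - 1)) r)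
    (hs : s ∈ Icc 1 ((N : ℤ) - 1)) (hsmax : IsMaxOn (orbitPt α) (Icc 1 ((N : ℤ) - 1)) s)
    (hrs : r + s = N) (hbij : BijOn u (Iio N) (Iio N))
    (hmono : StrictMonoOn (fun j => orbitPt α (u j)) (Iio N)) {j : ℕ} (hj : j < N) :
    (u j : ℤ) = j * r % N := by
  induction j with
  | zero =>
    have : u 0 = 0 := hbij.apply_zero_eq_of_strictMonoOn (f := fun n : ℕ => orbitPt α n) hmono hj
      fun n _ => by simpa using orbitPt_nonneg α n
    simp [this]
  | succ j ih =>
    rw [apply_succ_eq_emod_add hα hr hrmin hs hsmax hrs hbij hmono hj, ih (by omega),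
      Int.emod_add_emod]
    congr 1
    push_cast
    ring

end Relabeling

theorem emod_add_emod_eq_sub_two {N J k r : ℤ} (hN : 0 < N) (hJ : J * r % N = N - 1)
    (hk : ¬N ∣ k) : (J - k) * r % N + (J + k) * r % N = N - 2 := by
  have hN1 : N ≠ 1 := by rintro rfl; exact hk (one_dvd k)
  set a := (J - k) * r % N
  set b := (J + k) * r % N
  have ha : 0 ≤ a ∧ a < N := ⟨Int.emod_nonneg _ hN.ne', Int.emod_lt_of_pos _ hN⟩
  have hb : 0 ≤ b ∧ b < N := ⟨Int.emod_nonneg _ hN.ne', Int.emod_lt_of_pos _ hN⟩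
  have hJr : J * r ≡ N - 1 [ZMOD N] := by rw [← hJ]; exact (Int.mod_modEq _ _).symm
  have hsum : a + b ≡ N - 2 [ZMOD N] :=
    calc a + b ≡ (J - k) * r + (J + k) * r [ZMOD N] :=
          (Int.mod_modEq _ _).add (Int.mod_modEq _ _)
      _ = 2 * (J * r) := by ring
      _ ≡ 2 * (N - 1) [ZMOD N] := hJr.mul_left 2
      _ = N - 2 + N := by ring
      _ ≡ N - 2 [ZMOD N] := Int.add_emod_right _ _
  rcases lt_or_ge (a + b) N with hlt | hge
  · have := hsum
    rwa [Int.ModEq, Int.emod_eq_of_lt (by omega) hlt, Int.emod_eq_of_lt (by omega) (by omega)]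
      at this
  · -- then `a = b = N - 1`, so `(J - k) r ≡ J r`, i.e. `N ∣ k r`, and `J r ≡ -1` gives `N ∣ k`
    have := hsum
    rw [Int.ModEq, ← sub_add_cancel (a + b) N, Int.add_emod_right,
      Int.emod_eq_of_lt (by omega) (by omega), Int.emod_eq_of_lt (by omega) (by omega)] at this
    have hkr : N ∣ k * r := by
      have : (J - k) * r ≡ J * r [ZMOD N] := by unfold Int.ModEq; omega
      simpa [sub_mul] using this.dvd
    refine absurd ?_ hk
    have hk' : k = k * N - (J * (k * r) - k * (J * r - (N - 1))) := by ring
    rw [hk']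
    exact dvd_sub (dvd_mul_left N k) (dvd_sub (dvd_mul_of_dvd_right hkr J)
      (dvd_mul_of_dvd_right hJr.symm.dvd k))

theorem relabeling_index_sum (α : ℝ) (hα : Irrational α) (N : ℕ) (hN : 3 ≤ N)
    (u : ℕ → ℕ) (hbij : Set.BijOn u (Set.Iio N) (Set.Iio N))
    (hmono : StrictMonoOn (fun j => Int.fract ((u j : ℝ) * α)) (Set.Iio N))
    (hrel : (gapSet α N).card = 2)
    (J : ℕ) (hJ : J < N) (hJval : u J = N - 1) :
    ∀ k : ℕ, 1 ≤ k → k ≤ N - 2 →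
      uc N u ((J : ℤ) - (k : ℤ)) + uc N u ((J : ℤ) + (k : ℤ)) = N - 2 := by
  intro k hk1 hk2
  have hI : (Finset.Icc 1 ((N : ℤ) - 1)).Nonempty := ⟨1, Finset.mem_Icc.2 ⟨le_rfl, by omega⟩⟩
  obtain ⟨r, hr, hrmin⟩ := (Finset.Icc 1 ((N : ℤ) - 1)).exists_min_image (orbitPt α) hI
  obtain ⟨s, hs, hsmax⟩ := (Finset.Icc 1 ((N : ℤ) - 1)).exists_max_image (orbitPt α) hI
  simp only [Finset.mem_Icc, ← Set.mem_Icc] at hr hs hrmin hsmax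
  have hrs := add_eq_of_card_gapSet_eq_two hα hr (isMinOn_iff.2 hrmin) hs (isMaxOn_iff.2 hsmax) hrel
  have hu (j : ℕ) (hj : j < N) : (u j : ℤ) = j * r % N :=
    apply_eq_mul_emod hα hr (isMinOn_iff.2 hrmin) hs (isMaxOn_iff.2 hsmax) hrs hbij
      (by simpa [orbitPt] using hmono) hj
  have huc (t : ℤ) : (uc N u t : ℤ) = t * r % N := by
    have h0 : 0 ≤ t % N := Int.emod_nonneg _ (by omega)
    have hlt : t % N < N := Int.emod_lt_of_pos _ (by omega)
    rw [uc, hu _ (by omega), Int.toNat_of_nonneg h0]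
    exact (Int.mod_modEq t N).mul_right r
  have hJr : (J : ℤ) * r % N = N - 1 := by rw [← hu J hJ, hJval]; omega
  have hk : ¬(N : ℤ) ∣ k := fun h => by have := Int.le_of_dvd (by omega) h; omega
  have := emod_add_emod_eq_sub_two (by omega) hJr hk
  rw [← huc, ← huc] at this
  omega
end
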